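/- Let W be a finite subset of [0,1] with |W| > 3, let f : W → ℝ be a nonnegative function, and let C₁ ≥ 0 be a constant such that for every subset Z ⊆ W one has ∑_{θ ∈ Z} f(θ) ≤ C₁ · |Z|^{1/2}. Then ∑_{θ ∈ W} f(θ)² ≤ 2 · C₁² · log |W|. -/

import Mathlib

/-!
Remove a point where `f` is smallest: applying the hypothesis to all of `W` gives
`|W| · min f ≤ C₁ √|W|`, so the removed square is at most `C₁² / |W|`. Repeating on the
remaining set bounds `∑ f²` by `C₁²` times the harmonic number `H_|W| ≤ 1 + log |W|`,
and `1 ≤ log |W|` once `|W| ≥ 3 > e`.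
-/

open Finset Real

lemma sq_le_div_of_mul_le_mul_sqrt {a C n : ℝ} (ha : 0 ≤ a) (hn : 0 < n)
    (h : n * a ≤ C * √n) : a ^ 2 ≤ C ^ 2 / n := by
  have hsq : (n * a) ^ 2 ≤ (C * √n) ^ 2 := pow_le_pow_left₀ (by positivity) h 2
  rw [mul_pow, mul_pow, sq_sqrt hn.le] at hsq
  rw [le_div_iff₀ hn]
  nlinarith

section SubsetSumBound

variable {α : Type*} {f : α → ℝ} {C : ℝ}

lemma exists_sq_le_div_card_of_subset_sum_bound {s : Finset α} (hs : s.Nonempty)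
    (hf : ∀ x ∈ s, 0 ≤ f x) (hbound : ∑ x ∈ s, f x ≤ C * √(#s : ℝ)) :
    ∃ x ∈ s, f x ^ 2 ≤ C ^ 2 / #s := by
  obtain ⟨x, hx, hmin⟩ := s.exists_min_image f hs
  refine ⟨x, hx, sq_le_div_of_mul_le_mul_sqrt (hf x hx) (by positivity) ?_⟩
  calc (#s : ℝ) * f x = ∑ _ ∈ s, f x := by rw [sum_const, nsmul_eq_mul]
    _ ≤ ∑ y ∈ s, f y := sum_le_sum hmin
    _ ≤ C * √(#s : ℝ) := hbound

theorem sum_sq_le_mul_harmonic_of_subset_sum_bound [DecidableEq α] (s : Finset α)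
    (hf : ∀ x ∈ s, 0 ≤ f x) (hbound : ∀ t ⊆ s, ∑ x ∈ t, f x ≤ C * √(#t : ℝ)) :
    ∑ x ∈ s, f x ^ 2 ≤ C ^ 2 * harmonic #s := by
  induction s using Finset.strongInduction with
  | H s ih =>
    rcases s.eq_empty_or_nonempty with rfl | hs
    · simp
    obtain ⟨x, hx, hfx⟩ :=
      exists_sq_le_div_card_of_subset_sum_bound hs hf (hbound s subset_rfl)
    have hrest := ih (s.erase x) (erase_ssubset hx)
      (fun y hy => hf y (mem_of_mem_erase hy))
      (fun t ht => hbound t (ht.trans (erase_subset x s)))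
    obtain ⟨n, hn⟩ : ∃ n, #s = n + 1 := ⟨#(s.erase x), (card_erase_add_one hx).symm⟩
    rw [card_erase_of_mem hx, hn, Nat.add_sub_cancel] at hrest
    rw [hn] at hfx
    rw [← add_sum_erase s _ hx, hn, harmonic_succ]
    push_cast at hfx ⊢
    calc f x ^ 2 + ∑ y ∈ s.erase x, f y ^ 2 ≤ C ^ 2 / ((n : ℝ) + 1) + C ^ 2 * harmonic n :=
          add_le_add hfx hrest
      _ = C ^ 2 * (harmonic n + ((n : ℝ) + 1)⁻¹) := by ring

end SubsetSumBound

lemma harmonic_le_two_mul_log {n : ℕ} (hn : 3 ≤ n) : (harmonic n : ℝ) ≤ 2 * log n := by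
  have hlog : 1 ≤ log n := by
    rw [le_log_iff_exp_le (by positivity)]
    exact exp_one_lt_three.le.trans (by exact_mod_cast hn)
  linarith [harmonic_le_one_add_log n]

theorem sum_sq_le_of_subset_sum_bound (W : Finset ℝ)
    (hcard : 3 < W.card)
    (f : ℝ → ℝ) (hf : ∀ θ ∈ W, 0 ≤ f θ) (C₁ : ℝ)
    (hbound : ∀ Z ⊆ W, ∑ θ ∈ Z, f θ ≤ C₁ * Real.sqrt Z.card) :
    ∑ θ ∈ W, (f θ) ^ 2 ≤ 2 * C₁ ^ 2 * Real.log W.card :=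
  calc ∑ θ ∈ W, f θ ^ 2 ≤ C₁ ^ 2 * harmonic W.card :=
        sum_sq_le_mul_harmonic_of_subset_sum_bound W hf hbound
    _ ≤ C₁ ^ 2 * (2 * log W.card) := by
        gcongr
        exact harmonic_le_two_mul_log hcard.le
    _ = 2 * C₁ ^ 2 * log W.card := by ring
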